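/- In the situation of the coordinate change u = z − q with q ∈ 𝕂[x₁,…,xₙ] a nonzero homogeneous polynomial of positive degree: suppose there exists f ∈ J that is z-regular of order c, with expansion f = Σ_{i≥0} f_i z^i, and suppose o₁ > o. Then c!·deg q = o and q^{p^e} = λ·in(f_{c−p^e}) for some nonzero constant λ ∈ 𝕂^*, where p^e is the largest power of p dividing c and in(g) denotes the initial form (lowest-degree homogeneous part) of g. Here J ⊆ R = 𝕂[[z,x₁,…,xₙ]] is an ideal of order c with 1 ≤ c < ∞, o = ord coeff_{V(z)}(J) and o₁ = ord coeff_{V(u)}(J). -/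

import Mathlib

set_option synthInstance.maxHeartbeats 400000
set_option maxHeartbeats 1000000

noncomputable section

/-- The order of an element `g` with respect to an ideal `I`:  `sup {k : ℕ | g ∈ I ^ k}`,
with value in `ℕ∞` (so that the order of `0` is `⊤`). -/
def elemOrd {A : Type*} [CommRing A] (I : Ideal A) (g : A) : ℕ∞ :=
  sSup ((fun k : ℕ => (k : ℕ∞)) '' {k : ℕ | g ∈ I ^ k})

/-- The order of an ideal `J` with respect to an ideal `I`: `sup {k : ℕ | J ⊆ I ^ k}`. -/
def idealOrd {A : Type*} [CommRing A] (I J : Ideal A) : ℕ∞ :=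
  sSup ((fun k : ℕ => (k : ℕ∞)) '' {k : ℕ | J ≤ I ^ k})

/-- The coefficient ideal `K = coeff_{V(z)}(J) = Σ_{i<c} (f_i : f ∈ J)^{c!/(c−i)}` of an ideal
`J ⊆ R = 𝕂[[z,x₁,…,xₙ]] = Q[[z]]` with respect to the hypersurface `V(z)`, an ideal of
`Q = 𝕂[[x₁,…,xₙ]]`. -/
def coeffIdeal {𝕂 : Type*} [Field 𝕂] {n : ℕ}
    (J : Ideal (PowerSeries (MvPowerSeries (Fin n) 𝕂))) (c : ℕ) :
    Ideal (MvPowerSeries (Fin n) 𝕂) :=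
  ∑ i ∈ Finset.range c,
    (Ideal.span ((PowerSeries.coeff i) '' J)) ^ (c.factorial / (c - i))

/-- The coefficient ideal `K₁ = coeff_{V(u)}(J) = Σ_{i<c} (f̃_i : f ∈ J)^{c!/(c−i)}` of `J`
with respect to `V(u)`, computed from a function `E` assigning to each `f ∈ R` the family of
coefficients of its `u`-expansion. -/
def coeffIdealE {𝕂 : Type*} [Field 𝕂] {n : ℕ}
    (E : PowerSeries (MvPowerSeries (Fin n) 𝕂) → ℕ → MvPowerSeries (Fin n) 𝕂)
    (J : Ideal (PowerSeries (MvPowerSeries (Fin n) 𝕂))) (c : ℕ) :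
    Ideal (MvPowerSeries (Fin n) 𝕂) :=
  ∑ i ∈ Finset.range c, (Ideal.span ((fun f => E f i) '' J)) ^ (c.factorial / (c - i))

/-- An element `f = Σ_{i≥0} f_i z^i` of `R = Q[[z]]` is `z`-regular of order `c` if
`f_i(0) = 0` for all `i < c` and `f_c(0) ≠ 0`. -/
def zRegular {𝕂 : Type*} [Field 𝕂] {n : ℕ}
    (f : PowerSeries (MvPowerSeries (Fin n) 𝕂)) (c : ℕ) : Prop :=
  (∀ i < c, MvPowerSeries.constantCoeff
      (PowerSeries.coeff i f) = 0) ∧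
    MvPowerSeries.constantCoeff
      (PowerSeries.coeff c f) ≠ 0

/-- The homogeneous component of degree `d` of a multivariate power series. -/
def homogComp {𝕂 : Type*} [Field 𝕂] {n : ℕ} (d : ℕ) (g : MvPowerSeries (Fin n) 𝕂) :
    MvPowerSeries (Fin n) 𝕂 :=
  fun m => if m.degree = d then MvPowerSeries.coeff m g else 0

/-- The initial form of a power series: its nonzero homogeneous component of lowest degree. -/
def initialForm {𝕂 : Type*} [Field 𝕂] {n : ℕ} (g : MvPowerSeries (Fin n) 𝕂) :
    MvPowerSeries (Fin n) 𝕂 :=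
  homogComp (sInf {d : ℕ | homogComp d g ≠ 0}) g


/-!
Write `f_j` and `f̃_i` for the coefficients of `f` in powers of `z` and of `u = z - q`. Expanding
`u^i = (z - q)^i` gives, for every `N`, `f_j ≡ ∑_{j ≤ i < N} (i choose j) (-q)^(i-j) f̃_i` modulo
series of order `≥ (N - j) d`. Since the `k`-th power of the maximal ideal consists of the series
of order `≥ k`, `o₁ > o` says that `ord f̃_i > o (c - i) / c!` for all `f ∈ J` and `i < c`, while
`ord K = o` says that `ord f_j ≥ o (c - j) / c!` always and `ord f_j ≤ o (c - j) / c!` for some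
`f ∈ J` and `j < c`.

If `o < c! d`, every term of the expansion of that `f_j` has order `> o (c - j) / c!`, which is
impossible; so `o ≥ c! d`. Then, for `j = c - p^e`, every term except `i = c` has order
`> p^e d`, and the term `(c choose p^e) (-q)^(p^e) f̃_c` is `q^(p^e)` times a unit, since
`c choose p^e` is prime to `p` by Lucas' theorem and `f̃_c(0) = f_c(0) ≠ 0`. So
`in(f_{c-p^e})` is a nonzero multiple of `q^(p^e)`, and `ord f_{c-p^e} = p^e d` gives `o ≤ c! d`.
-/

open Finset IsLocalRing

theorem Nat.div_div_eq_mul_div_of_dvd {o F m : ℕ} (hm : 0 < m) (h : m ∣ F) :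
    o / (F / m) = o * m / F := by
  obtain ⟨k, rfl⟩ := h
  rw [Nat.mul_div_cancel_left _ hm, mul_comm m k, Nat.mul_div_mul_right _ _ hm]

namespace ENat

theorem ceilDiv_le_of_le_mul {k N : ℕ} (hN : 0 < N) {x : ℕ∞} (h : (k : ℕ∞) ≤ N * x) :
    ((k ⌈/⌉ N : ℕ) : ℕ∞) ≤ x := by
  induction x with
  | top => exact le_top
  | coe y =>
    rw [← Nat.cast_mul, Nat.cast_le] at h
    exact Nat.cast_le.2 ((ceilDiv_le_iff_le_mul hN).2 h)

theorem lt_mul_iff_div_lt {o N : ℕ} (hN : 0 < N) {x : ℕ∞} :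
    (o : ℕ∞) < N * x ↔ ((o / N : ℕ) : ℕ∞) < x := by
  induction x with
  | top => simp [hN.ne']
  | coe y => rw [← Nat.cast_mul, Nat.cast_lt, Nat.cast_lt, Nat.div_lt_iff_lt_mul hN, mul_comm]

end ENat

namespace MvPowerSeries

section Order

variable {σ R : Type*} [CommRing R]

theorem le_order_sum {ι : Type*} {s : Finset ι} {F : ι → MvPowerSeries σ R} {k : ℕ∞}
    (h : ∀ i ∈ s, k ≤ (F i).order) : k ≤ (∑ i ∈ s, F i).order :=
  Finset.sum_induction F (fun x => k ≤ x.order)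
    (fun _ _ hx hy => (le_min hx hy).trans min_order_le_add) (by simp) h

theorem order_eq_of_lt_order_sub {x y : MvPowerSeries σ R} (h : y.order < (x - y).order) :
    x.order = y.order := by
  rw [← add_sub_cancel y x, order_add_of_order_ne h.ne, min_eq_left h.le]

theorem order_le_order_mul_left (x y : MvPowerSeries σ R) : y.order ≤ (x * y).order :=
  le_add_self.trans le_order_mul

theorem order_le_order_mul_right (x y : MvPowerSeries σ R) : x.order ≤ (x * y).order :=
  le_self_add.trans le_order_mul

theorem le_order_pow_of_le {x : MvPowerSeries σ R} {d : ℕ} (h : (d : ℕ∞) ≤ x.order) (k : ℕ) :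
    ((k * d : ℕ) : ℕ∞) ≤ (x ^ k).order := by
  refine le_trans ?_ (le_order_pow k)
  rw [nsmul_eq_mul, Nat.cast_mul]
  exact mul_le_mul_right h _

theorem order_pow [NoZeroDivisors R] [Nontrivial R] (x : MvPowerSeries σ R) (k : ℕ) :
    (x ^ k).order = k * x.order := by
  induction k with
  | zero => rw [pow_zero, Nat.cast_zero, zero_mul]; exact weightedOrder_one _
  | succ k ih => rw [pow_succ, order_mul, ih, Nat.cast_succ, add_one_mul]

theorem order_X [Nontrivial R] (i : σ) : (X i : MvPowerSeries σ R).order = 1 := by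
  rw [X, order_monomial_of_ne_zero one_ne_zero, Finsupp.degree_single, Nat.cast_one]

theorem IsHomogeneous.order_eq {f : MvPowerSeries σ R} {k : ℕ} (hf : f.IsHomogeneous k)
    (h0 : f ≠ 0) : f.order = k := by
  obtain ⟨m, hm⟩ : ∃ m, coeff m f ≠ 0 := by
    by_contra! h
    exact h0 (ext h)
  have hmk : m.degree = k := by
    by_contra hne
    exact hm (hf.coeff_eq_zero hne)
  exact le_antisymm (hmk ▸ order_le hm)
    (le_order fun m' hm' => hf.coeff_eq_zero fun h => (h ▸ hm').false)

end Order

section LeastVariable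

variable {σ R : Type*} [CommRing R] [LinearOrder σ]

/-- The cofactor of `X i` in the part of `x` made of the monomials whose least variable is `i`. -/
def leastVarCofactor (i : σ) (x : MvPowerSeries σ R) : MvPowerSeries σ R :=
  fun m => if ∀ j ∈ m.support, i ≤ j then coeff (m + Finsupp.single i 1) x else 0

theorem coeff_X_mul_leastVarCofactor (i : σ) (x : MvPowerSeries σ R) (m : σ →₀ ℕ) :
    coeff m (X i * leastVarCofactor i x) =
      if Finsupp.single i 1 ≤ m ∧ ∀ j ∈ m.support, i ≤ j then coeff m x else 0 := by
  classical
  rw [X, coeff_monomial_mul, one_mul]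
  by_cases hi : Finsupp.single i 1 ≤ m
  · have hsupp : ∀ j, j ≠ i → (j ∈ (m - Finsupp.single i 1).support ↔ j ∈ m.support) :=
      fun j hj => by simp [hj]
    simp only [hi, true_and, if_true, leastVarCofactor, coeff_apply, tsub_add_cancel_of_le hi]
    refine if_congr (forall_congr' fun j => ?_) rfl rfl
    rcases eq_or_ne j i with rfl | hj
    · simp
    · rw [hsupp j hj]
  · simp [hi]

theorem order_le_order_X_mul_leastVarCofactor (i : σ) (x : MvPowerSeries σ R) :
    x.order ≤ (X i * leastVarCofactor i x).order :=
  le_order fun m hm => by rw [coeff_X_mul_leastVarCofactor, coeff_of_lt_order hm, ite_self]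

theorem sum_X_mul_leastVarCofactor [Fintype σ] {x : MvPowerSeries σ R}
    (hx : constantCoeff x = 0) : ∑ i, X i * leastVarCofactor i x = x := by
  ext m
  simp only [map_sum, coeff_X_mul_leastVarCofactor]
  rcases eq_or_ne m 0 with rfl | hm
  · simp [hx]
  have hne : m.support.Nonempty := Finsupp.support_nonempty_iff.2 hm
  rw [Finset.sum_eq_single (m.support.min' hne)]
  · refine if_pos ⟨Finsupp.single_le_iff.2 ?_, fun j hj => m.support.min'_le j hj⟩
    exact Nat.one_le_iff_ne_zero.2 (Finsupp.mem_support_iff.1 (m.support.min'_mem hne))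
  · rintro i - hi
    refine if_neg fun ⟨him, hle⟩ => hi (le_antisymm (hle _ (m.support.min'_mem hne)) ?_)
    exact m.support.min'_le i
      (Finsupp.mem_support_iff.2 (Nat.one_le_iff_ne_zero.1 (Finsupp.single_le_iff.1 him)))
  · simp

end LeastVariable

section MaximalIdeal

variable {σ 𝕂 : Type*} [Field 𝕂]

theorem mem_maximalIdeal_iff {x : MvPowerSeries σ 𝕂} :
    x ∈ maximalIdeal (MvPowerSeries σ 𝕂) ↔ constantCoeff x = 0 := by
  rw [mem_maximalIdeal, mem_nonunits_iff, isUnit_iff_constantCoeff, isUnit_iff_ne_zero, not_not]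

theorem le_order_of_mem_maximalIdeal_pow {k : ℕ} {x : MvPowerSeries σ 𝕂}
    (hx : x ∈ maximalIdeal (MvPowerSeries σ 𝕂) ^ k) : (k : ℕ∞) ≤ x.order := by
  induction k generalizing x with
  | zero => simp
  | succ k ih =>
    rw [pow_succ] at hx
    refine Submodule.mul_induction_on hx (fun y hy z hz => ?_)
      (fun _ _ hy hz => (le_min hy hz).trans min_order_le_add)
    rw [order_mul, Nat.cast_succ]
    exact add_le_add (ih hy) (one_le_order_iff_constCoeff_eq_zero.2 (mem_maximalIdeal_iff.1 hz))

theorem mem_maximalIdeal_pow_of_le_order [Fintype σ] {k : ℕ} {x : MvPowerSeries σ 𝕂}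
    (hx : (k : ℕ∞) ≤ x.order) : x ∈ maximalIdeal (MvPowerSeries σ 𝕂) ^ k := by
  let : LinearOrder σ := LinearOrder.lift' _ (Fintype.equivFin σ).injective
  induction k generalizing x with
  | zero => simp
  | succ k ih =>
    rw [← sum_X_mul_leastVarCofactor (one_le_order_iff_constCoeff_eq_zero.1
      (le_trans (by simp) hx))]
    refine Ideal.sum_mem _ fun i _ => ?_
    rw [pow_succ']
    refine Ideal.mul_mem_mul (mem_maximalIdeal_iff.2 (constantCoeff_X i)) (ih ?_)
    have h := hx.trans (order_le_order_X_mul_leastVarCofactor i x)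
    rw [order_mul, order_X, Nat.cast_succ, add_comm] at h
    exact (WithTop.add_le_add_iff_left ENat.one_ne_top).1 h

theorem mem_maximalIdeal_pow_iff [Fintype σ] {k : ℕ} {x : MvPowerSeries σ 𝕂} :
    x ∈ maximalIdeal (MvPowerSeries σ 𝕂) ^ k ↔ (k : ℕ∞) ≤ x.order :=
  ⟨le_order_of_mem_maximalIdeal_pow, mem_maximalIdeal_pow_of_le_order⟩

theorem sum_span_pow_le_maximalIdeal_pow_iff [Fintype σ] {ι : Type*} {s : Finset ι}
    {S : ι → Set (MvPowerSeries σ 𝕂)} {N : ι → ℕ} (hN : ∀ i ∈ s, 0 < N i) {k : ℕ} :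
    ∑ i ∈ s, Ideal.span (S i) ^ N i ≤ maximalIdeal (MvPowerSeries σ 𝕂) ^ k ↔
      ∀ i ∈ s, ∀ x ∈ S i, (k : ℕ∞) ≤ N i * x.order := by
  refine ⟨fun h i hi x hx => ?_, fun h => ?_⟩
  · have hmem : x ^ N i ∈ ∑ i ∈ s, Ideal.span (S i) ^ N i :=
      Finset.single_le_sum (f := fun i => Ideal.span (S i) ^ N i) (fun _ _ => zero_le) hi
        (Ideal.pow_mem_pow (Ideal.subset_span hx) _)
    rw [← order_pow]
    exact mem_maximalIdeal_pow_iff.1 (h hmem)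
  · refine Finset.sum_induction _ (· ≤ _) (fun _ _ ha hb => sup_le ha hb) bot_le fun i hi => ?_
    have hspan : Ideal.span (S i) ≤ maximalIdeal _ ^ (k ⌈/⌉ N i) :=
      Ideal.span_le.2 fun x hx =>
        mem_maximalIdeal_pow_iff.2 (ENat.ceilDiv_le_of_le_mul (hN i hi) (h i hi x hx))
    calc Ideal.span (S i) ^ N i ≤ (maximalIdeal _ ^ (k ⌈/⌉ N i)) ^ N i :=
          Ideal.pow_right_mono hspan _
      _ = maximalIdeal _ ^ (N i * (k ⌈/⌉ N i)) := by rw [← pow_mul, mul_comm]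
      _ ≤ maximalIdeal _ ^ k :=
          Ideal.pow_le_pow_right ((ceilDiv_le_iff_le_mul (hN i hi)).1 le_rfl)

end MaximalIdeal

end MvPowerSeries

theorem MvPolynomial.IsHomogeneous.coe {σ R : Type*} [CommRing R] {P : MvPolynomial σ R} {k : ℕ}
    (hP : P.IsHomogeneous k) : (P : MvPowerSeries σ R).IsHomogeneous k := fun h =>
  hP (by rwa [MvPolynomial.coeff_coe] at h)

theorem MvPolynomial.IsHomogeneous.order_coe {σ R : Type*} [CommRing R] {P : MvPolynomial σ R}
    {k : ℕ} (hP : P.IsHomogeneous k) (hP0 : P ≠ 0) : (P : MvPowerSeries σ R).order = k :=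
  MvPowerSeries.IsHomogeneous.order_eq hP.coe (by simpa using hP0)

section IdealOrd

variable {A : Type*} [CommRing A] {I J : Ideal A} {k : ℕ}

theorem le_idealOrd_iff : (k : ℕ∞) ≤ idealOrd I J ↔ J ≤ I ^ k := by
  refine ⟨fun h => ?_, fun h => le_sSup ⟨k, h, rfl⟩⟩
  by_contra hJ
  have hlt : ∀ j, J ≤ I ^ j → j < k := fun j hj =>
    lt_of_not_ge fun hkj => hJ (hj.trans (Ideal.pow_le_pow_right hkj))
  have hk : idealOrd I J ≤ ((k - 1 : ℕ) : ℕ∞) := sSup_le <| by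
    rintro _ ⟨j, hj, rfl⟩
    exact Nat.cast_le.2 (Nat.le_sub_one_of_lt (hlt j hj))
  have := Nat.cast_le.1 (h.trans hk)
  exact (hlt 0 (by simp)).ne' (by omega)

theorem idealOrd_eq_coe_iff : idealOrd I J = k ↔ J ≤ I ^ k ∧ ¬ J ≤ I ^ (k + 1) := by
  rw [← le_idealOrd_iff, ← le_idealOrd_iff, Nat.cast_add_one,
    ENat.add_one_le_iff (ENat.natCast_ne_top k), not_lt, le_antisymm_iff, and_comm]

theorem lt_idealOrd_iff : (k : ℕ∞) < idealOrd I J ↔ J ≤ I ^ (k + 1) := by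
  rw [← le_idealOrd_iff, Nat.cast_add_one, ENat.add_one_le_iff (ENat.natCast_ne_top k)]

end IdealOrd

namespace PowerSeries

variable {A : Type*} [CommRing A]

theorem coeff_X_sub_C_pow (v : A) (n k : ℕ) :
    coeff k ((X - C v) ^ n) = (-v) ^ (n - k) * n.choose k := by
  have hX : (X - C v : PowerSeries A) =
      ((Polynomial.X + Polynomial.C (-v) : Polynomial A) : PowerSeries A) := by
    rw [Polynomial.coe_add, Polynomial.coe_X, Polynomial.coe_C, map_neg, sub_eq_add_neg]
  rw [hX, ← Polynomial.coe_pow, Polynomial.coeff_coe, Polynomial.coeff_X_add_C_pow]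

def IsExpansionAt (v : A) (f : PowerSeries A) (a : ℕ → A) : Prop :=
  ∀ N, f - ∑ i ∈ range N, C (a i) * (X - C v) ^ i ∈ Ideal.span {(X - C v) ^ N}

namespace IsExpansionAt

variable {σ R : Type*} [CommRing R] {v : MvPowerSeries σ R}
  {f : PowerSeries (MvPowerSeries σ R)} {a : ℕ → MvPowerSeries σ R} {d : ℕ}

theorem le_order_coeff_sub_sum (hf : IsExpansionAt v f a) (hv : (d : ℕ∞) ≤ v.order)
    (j N : ℕ) : (((N - j) * d : ℕ) : ℕ∞) ≤
      (coeff j f - ∑ i ∈ range N, (-v) ^ (i - j) * i.choose j * a i).order := by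
  obtain ⟨h, hh⟩ := Ideal.mem_span_singleton'.1 (hf N)
  have hcoeff : coeff j f - ∑ i ∈ range N, (-v) ^ (i - j) * i.choose j * a i =
      coeff j (h * (X - C v) ^ N) := by
    simp only [hh, map_sub, map_sum, coeff_C_mul, coeff_X_sub_C_pow, mul_comm (a _)]
  rw [hcoeff, coeff_mul]
  refine MvPowerSeries.le_order_sum fun p hp => ?_
  rw [coeff_X_sub_C_pow, ← mul_assoc]
  refine le_trans ?_ (MvPowerSeries.order_le_order_mul_right _ _)
  refine le_trans ?_ (MvPowerSeries.order_le_order_mul_left _ _)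
  rw [← MvPowerSeries.order_neg v] at hv
  refine le_trans (Nat.cast_le.2 ?_) (MvPowerSeries.le_order_pow_of_le hv _)
  have := Finset.HasAntidiagonal.mem_antidiagonal.1 hp
  exact Nat.mul_le_mul_right d (by omega)

theorem le_order_coeff_sub_sum_of_le (hf : IsExpansionAt v f a) (hv : (d : ℕ∞) ≤ v.order)
    {j N s : ℕ} {S : Finset ℕ} (hS : S ⊆ range N) (hN : s ≤ (N - j) * d)
    (ha : ∀ i ∈ range N \ S, j ≤ i → (s : ℕ∞) ≤ ((i - j) * d : ℕ) + (a i).order) :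
    (s : ℕ∞) ≤ (coeff j f - ∑ i ∈ S, (-v) ^ (i - j) * i.choose j * a i).order := by
  set T : ℕ → MvPowerSeries σ R := fun i => (-v) ^ (i - j) * i.choose j * a i
  have hsplit : coeff j f - ∑ i ∈ S, T i =
      (coeff j f - ∑ i ∈ range N, T i) + ∑ i ∈ range N \ S, T i := by
    rw [← Finset.sum_sdiff hS]
    ring
  rw [hsplit]
  refine le_trans (le_min ((Nat.cast_le.2 hN).trans (hf.le_order_coeff_sub_sum hv j N))
    (MvPowerSeries.le_order_sum fun i hi => ?_)) MvPowerSeries.min_order_le_add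
  rcases lt_or_ge i j with hij | hji
  · simp [T, Nat.choose_eq_zero_of_lt hij]
  refine (ha i hi hji).trans (le_trans (add_le_add_left ?_ _) MvPowerSeries.le_order_mul)
  rw [← MvPowerSeries.order_neg v] at hv
  exact (MvPowerSeries.le_order_pow_of_le hv _).trans (MvPowerSeries.order_le_order_mul_right _ _)

theorem lt_order_coeff_sub_of_lt_order (hf : IsExpansionAt v f a) (hv : (d : ℕ∞) ≤ v.order)
    (hd : 1 ≤ d) {c j : ℕ} (hj : j ≤ c)
    (ha : ∀ i < c, (((c - i) * d : ℕ) : ℕ∞) < (a i).order) :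
    (((c - j) * d : ℕ) : ℕ∞) < (coeff j f - (-v) ^ (c - j) * c.choose j * a c).order := by
  rw [← ENat.add_one_le_iff (ENat.natCast_ne_top _), ← Nat.cast_add_one,
    ← Finset.sum_singleton (fun i => (-v) ^ (i - j) * i.choose j * a i) c]
  refine hf.le_order_coeff_sub_sum_of_le hv (N := c + 1) (by simp) ?_ fun i hi hji => ?_
  · rw [Nat.sub_add_comm hj, add_one_mul]
    omega
  · have hic : i < c := by simp at hi; omega
    have hsum : (c - j) * d + 1 = (i - j) * d + ((c - i) * d + 1) := by
      rw [← add_assoc, ← add_mul]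
      congr 2
      omega
    rw [hsum, Nat.cast_add, Nat.cast_add_one]
    exact add_le_add le_rfl ((ENat.add_one_le_iff (ENat.natCast_ne_top _)).2 (ha i hic))

theorem lt_order_coeff_of_lt (hf : IsExpansionAt v f a) (hv : (d : ℕ∞) ≤ v.order)
    {c j : ℕ} {t : ℕ → ℕ} (ht : ∀ i, j ≤ i → i < c → t j ≤ (i - j) * d + t i)
    (htc : t j < (c - j) * d) (ha : ∀ i < c, (t i : ℕ∞) < (a i).order) :
    (t j : ℕ∞) < (coeff j f).order := by
  have h := hf.le_order_coeff_sub_sum_of_le hv (s := t j + 1) (N := c) (S := ∅) (by simp) htc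
    fun i hi hji => ?_
  · rwa [Finset.sum_empty, sub_zero, Nat.cast_succ,
      ENat.add_one_le_iff (ENat.natCast_ne_top _)] at h
  have hic : i < c := by simpa using hi
  calc ((t j + 1 : ℕ) : ℕ∞) ≤ ((i - j) * d : ℕ) + ((t i + 1 : ℕ) : ℕ∞) := by
        rw [← Nat.cast_add, Nat.cast_le]
        have := ht i hji hic
        omega
    _ ≤ _ := by
        rw [Nat.cast_add_one]
        exact add_le_add le_rfl ((ENat.add_one_le_iff (ENat.natCast_ne_top _)).2 (ha i hic))

theorem constantCoeff_coeff (hf : IsExpansionAt v f a) (hv : MvPowerSeries.constantCoeff v = 0)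
    (j : ℕ) : MvPowerSeries.constantCoeff (coeff j f) = MvPowerSeries.constantCoeff (a j) := by
  have h := hf.le_order_coeff_sub_sum_of_le (d := 1) (j := j) (s := 1) (N := j + 1) (S := {j})
    (by simpa using MvPowerSeries.one_le_order_iff_constCoeff_eq_zero.2 hv) (by simp) (by simp)
    fun i hi hji => by simp at hi; omega
  simp only [Finset.sum_singleton, Nat.sub_self, pow_zero, Nat.choose_self, Nat.cast_one,
    one_mul, MvPowerSeries.one_le_order_iff_constCoeff_eq_zero, map_sub] at h
  exact sub_eq_zero.1 h

end IsExpansionAt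

end PowerSeries

section Thresholds

variable {o F d x y z : ℕ}

theorem mul_div_le_mul_add_mul_div (ho : o ≤ F * d) (h : x ≤ y + z) :
    o * x / F ≤ y * d + o * z / F := by
  rcases Nat.eq_zero_or_pos F with rfl | hF
  · simp
  have hox : o * x ≤ o * z + y * d * F :=
    calc o * x ≤ o * z + o * y := by rw [← mul_add, add_comm]; exact Nat.mul_le_mul_left o h
      _ ≤ o * z + F * d * y := Nat.add_le_add_left (Nat.mul_le_mul_right y ho) _
      _ = o * z + y * d * F := by ring
  calc o * x / F ≤ (o * z + y * d * F) / F := Nat.div_le_div_right hox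
    _ = y * d + o * z / F := by rw [Nat.add_mul_div_right _ _ hF, add_comm]

theorem mul_div_lt_mul_of_lt (ho : o < F * d) (hx : 0 < x) : o * x / F < x * d := by
  rw [Nat.div_lt_iff_lt_mul (Nat.pos_of_ne_zero (by rintro rfl; simp at ho))]
  calc o * x < F * d * x := Nat.mul_lt_mul_of_pos_right ho hx
    _ = x * d * F := by ring

theorem mul_le_mul_div_of_le (ho : F * d ≤ o) (hF : 0 < F) : x * d ≤ o * x / F := by
  rw [Nat.le_div_iff_mul_le hF]
  calc x * d * F = F * d * x := by ring
    _ ≤ o * x := Nat.mul_le_mul_right x ho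

theorem factorial_div_sub_pos {c i : ℕ} (hi : i < c) : 0 < c.factorial / (c - i) :=
  Nat.div_pos (Nat.le_of_dvd c.factorial_pos (Nat.dvd_factorial (by omega) (Nat.sub_le c i)))
    (by omega)

end Thresholds

theorem cast_choose_prime_pow_ne_zero {R : Type*} [AddMonoidWithOne R] {p : ℕ} (hp : p.Prime)
    [CharP R p] {e c : ℕ} (he : p ^ e ∣ c) (he' : ¬ p ^ (e + 1) ∣ c) :
    (c.choose (p ^ e) : R) ≠ 0 := by
  have := Fact.mk hp
  obtain ⟨m, rfl⟩ := he
  have hm : ¬ p ∣ m := fun h => he' (pow_succ p e ▸ Nat.mul_dvd_mul_left _ h)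
  have hlucas := Choose.choose_pow_mul_pow_mul_modEq_choose_nat (p := p) (k := e) (a := m) (b := 1)
  rw [mul_one, Nat.choose_one_right] at hlucas
  rw [CharP.natCast_eq_natCast' R p hlucas, ne_eq, CharP.cast_eq_zero_iff R p]
  exact hm

open MvPowerSeries

section InitialForm

variable {𝕂 : Type*} [Field 𝕂] {n : ℕ}

theorem homogComp_eq_homogeneousComponent (k : ℕ) (g : MvPowerSeries (Fin n) 𝕂) :
    homogComp k g = homogeneousComponent k g := by
  ext m
  rw [coeff_homogeneousComponent]
  rfl

theorem initialForm_eq_homogeneousComponent {g : MvPowerSeries (Fin n) 𝕂} {k : ℕ}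
    (hg : g.order = k) : initialForm g = homogeneousComponent k g := by
  have hk : sInf {d : ℕ | homogComp d g ≠ 0} = k := by
    simp only [homogComp_eq_homogeneousComponent]
    refine le_antisymm (Nat.sInf_le (homogeneousComponent_of_order hg.symm)) ?_
    refine le_csInf ⟨k, homogeneousComponent_of_order hg.symm⟩ fun d hd => ?_
    by_contra! hdk
    exact hd (homogeneousComponent_of_lt_order_eq_zero (hg ▸ Nat.cast_lt.2 hdk))
  rw [initialForm, hk, homogComp_eq_homogeneousComponent]

theorem initialForm_eq_of_lt_order_sub {x P : MvPowerSeries (Fin n) 𝕂} {k : ℕ}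
    (hP : P.IsHomogeneous k) (hP0 : P ≠ 0) (h : (k : ℕ∞) < (x - P).order) :
    initialForm x = P := by
  have hPk := hP.order_eq hP0
  rw [initialForm_eq_homogeneousComponent ((order_eq_of_lt_order_sub (hPk ▸ h)).trans hPk),
    ← add_sub_cancel P x, map_add, homogeneousComponent_of_lt_order_eq_zero h, add_zero,
    ← isHomogeneous_iff_eq_homogeneousComponent.1 hP]

theorem order_eq_and_initialForm_eq {q : MvPolynomial (Fin n) 𝕂} {d k : ℕ}
    (hq : q.IsHomogeneous d) (hq0 : q ≠ 0) {x w : MvPowerSeries (Fin n) 𝕂} {b : ℕ}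
    (hb : (b : 𝕂) ≠ 0) (hw : constantCoeff w ≠ 0)
    (h : ((k * d : ℕ) : ℕ∞) <
      (x - (-(q : MvPowerSeries (Fin n) 𝕂)) ^ k * (b : MvPowerSeries (Fin n) 𝕂) * w).order) :
    x.order = (k * d : ℕ) ∧
      ∃ μ : 𝕂, μ ≠ 0 ∧ initialForm x = C μ * (q : MvPowerSeries (Fin n) 𝕂) ^ k := by
  set v : MvPowerSeries (Fin n) 𝕂 := ↑q
  set μ : 𝕂 := (-1) ^ k * b * constantCoeff w
  have hμ : μ ≠ 0 := mul_ne_zero (mul_ne_zero (by simp) hb) hw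
  set P : MvPowerSeries (Fin n) 𝕂 := C μ * v ^ k
  have hP : P.IsHomogeneous (k * d) := by
    have : ((MvPolynomial.C μ * q ^ k : MvPolynomial (Fin n) 𝕂) :
        MvPowerSeries (Fin n) 𝕂).IsHomogeneous (d * k) := ((hq.pow k).C_mul _).coe
    rwa [MvPolynomial.coe_mul, MvPolynomial.coe_C, MvPolynomial.coe_pow, mul_comm d] at this
  have hP0 : P ≠ 0 := mul_ne_zero (by simpa using hμ) (pow_ne_zero _ (by simpa [v] using hq0))
  have hsub : x - P = (x - (-v) ^ k * (b : MvPowerSeries (Fin n) 𝕂) * w) +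
      (-v) ^ k * (b : MvPowerSeries (Fin n) 𝕂) * (w - C (constantCoeff w)) := by
    simp only [P, μ, map_mul, map_pow, map_neg, map_one, map_natCast, neg_pow v]
    ring
  have hvk : ((k * d : ℕ) : ℕ∞) ≤ ((-v) ^ k * (b : MvPowerSeries (Fin n) 𝕂)).order :=
    (le_order_pow_of_le ((order_neg _).trans (hq.order_coe hq0)).ge k).trans
      (order_le_order_mul_right _ _)
  have hlt : ((k * d : ℕ) : ℕ∞) < (x - P).order := by
    refine hsub ▸ lt_of_lt_of_le (lt_min h ?_) min_order_le_add
    calc ((k * d : ℕ) : ℕ∞) < (k * d : ℕ) + 1 :=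
          (ENat.lt_add_one_iff (ENat.natCast_ne_top _)).2 le_rfl
      _ ≤ _ := add_le_add hvk (one_le_order_iff_constCoeff_eq_zero.2 (by simp))
      _ ≤ _ := le_order_mul
  exact ⟨(order_eq_of_lt_order_sub (hP.order_eq hP0 ▸ hlt)).trans (hP.order_eq hP0),
    μ, hμ, initialForm_eq_of_lt_order_sub hP hP0 hlt⟩

end InitialForm

section CoeffIdeal

variable {𝕂 : Type*} [Field 𝕂] {n : ℕ}
  {E : PowerSeries (MvPowerSeries (Fin n) 𝕂) → ℕ → MvPowerSeries (Fin n) 𝕂}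
  {J : Ideal (PowerSeries (MvPowerSeries (Fin n) 𝕂))} {c : ℕ}

theorem coeffIdeal_eq_coeffIdealE :
    coeffIdeal J c = coeffIdealE (fun g i => PowerSeries.coeff i g) J c := rfl

theorem coeffIdealE_le_maximalIdeal_pow_iff {k : ℕ} :
    coeffIdealE E J c ≤ maximalIdeal (MvPowerSeries (Fin n) 𝕂) ^ k ↔
      ∀ g ∈ J, ∀ i < c, (k : ℕ∞) ≤ (c.factorial / (c - i) : ℕ) * (E g i).order := by
  rw [coeffIdealE, sum_span_pow_le_maximalIdeal_pow_iff fun i hi =>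
    factorial_div_sub_pos (Finset.mem_range.1 hi)]
  simp only [Finset.mem_range, Set.forall_mem_image]
  exact ⟨fun h g hg i hi => h i hi hg, fun h i hi g hg => h g hg i hi⟩

theorem coeffIdealE_le_maximalIdeal_pow_succ_iff {o : ℕ} :
    coeffIdealE E J c ≤ maximalIdeal (MvPowerSeries (Fin n) 𝕂) ^ (o + 1) ↔
      ∀ g ∈ J, ∀ i < c, ((o * (c - i) / c.factorial : ℕ) : ℕ∞) < (E g i).order := by
  rw [coeffIdealE_le_maximalIdeal_pow_iff]
  refine forall₂_congr fun g _ => forall₂_congr fun i hi => ?_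
  rw [Nat.cast_add_one, ENat.add_one_le_iff (ENat.natCast_ne_top _),
    ENat.lt_mul_iff_div_lt (factorial_div_sub_pos hi),
    Nat.div_div_eq_mul_div_of_dvd (by omega) (Nat.dvd_factorial (by omega) (Nat.sub_le c i))]

theorem factorial_mul_le_of_coeffIdealE_le {d o : ℕ} {v : MvPowerSeries (Fin n) 𝕂}
    (hv : (d : ℕ∞) ≤ v.order) (hE : ∀ g, PowerSeries.IsExpansionAt v g (E g))
    (hK₁ : coeffIdealE E J c ≤ maximalIdeal (MvPowerSeries (Fin n) 𝕂) ^ (o + 1))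
    (hK : ¬ coeffIdeal J c ≤ maximalIdeal (MvPowerSeries (Fin n) 𝕂) ^ (o + 1)) :
    c.factorial * d ≤ o := by
  by_contra! ho
  rw [coeffIdealE_le_maximalIdeal_pow_succ_iff] at hK₁
  rw [coeffIdeal_eq_coeffIdealE, coeffIdealE_le_maximalIdeal_pow_succ_iff] at hK
  exact hK fun g hg j hj => (hE g).lt_order_coeff_of_lt hv
    (t := fun i => o * (c - i) / c.factorial)
    (fun i hji _ => mul_div_le_mul_add_mul_div ho.le (by omega))
    (mul_div_lt_mul_of_lt ho (by omega)) (hK₁ g hg)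

theorem le_factorial_mul_of_order_coeff_eq {d o j : ℕ} {g : PowerSeries (MvPowerSeries (Fin n) 𝕂)}
    (hK : coeffIdeal J c ≤ maximalIdeal (MvPowerSeries (Fin n) 𝕂) ^ o) (hg : g ∈ J) (hj : j < c)
    (hord : (PowerSeries.coeff j g).order = ((c - j) * d : ℕ)) : o ≤ c.factorial * d := by
  have h := coeffIdealE_le_maximalIdeal_pow_iff.1 hK g hg j hj
  rwa [hord, ← Nat.cast_mul, Nat.cast_le, ← mul_assoc,
    Nat.div_mul_cancel (Nat.dvd_factorial (by omega) (Nat.sub_le c j))] at h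

end CoeffIdeal

theorem translation_increasing_order_shape_general {𝕂 : Type*} [Field 𝕂] (p : ℕ)
    (hp : p.Prime) [CharP 𝕂 p] {n : ℕ}
    (q : MvPolynomial (Fin n) 𝕂) (d : ℕ) (hq0 : q ≠ 0) (hqd : q.IsHomogeneous d) (hd : 1 ≤ d)
    (u : PowerSeries (MvPowerSeries (Fin n) 𝕂))
    (hu : u = PowerSeries.X -
      PowerSeries.C (↑q : MvPowerSeries (Fin n) 𝕂))
    (J : Ideal (PowerSeries (MvPowerSeries (Fin n) 𝕂))) (c : ℕ) (hc1 : 1 ≤ c)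
    (E : PowerSeries (MvPowerSeries (Fin n) 𝕂) → ℕ → MvPowerSeries (Fin n) 𝕂)
    (hE : ∀ f : PowerSeries (MvPowerSeries (Fin n) 𝕂), ∀ N : ℕ,
      f - ∑ i ∈ Finset.range N, PowerSeries.C (E f i) * u ^ i
        ∈ Ideal.span {u ^ N})
    (e : ℕ) (he : p ^ e ∣ c) (he' : ¬ p ^ (e + 1) ∣ c)
    (f : PowerSeries (MvPowerSeries (Fin n) 𝕂)) (hfJ : f ∈ J) (hreg : zRegular f c)
    (hincr : idealOrd (IsLocalRing.maximalIdeal (MvPowerSeries (Fin n) 𝕂)) (coeffIdealE E J c)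
      > idealOrd (IsLocalRing.maximalIdeal (MvPowerSeries (Fin n) 𝕂)) (coeffIdeal J c)) :
    ((c.factorial * d : ℕ) : ℕ∞)
        = idealOrd (IsLocalRing.maximalIdeal (MvPowerSeries (Fin n) 𝕂)) (coeffIdeal J c) ∧
      ∃ lam : 𝕂, lam ≠ 0 ∧
        (↑q : MvPowerSeries (Fin n) 𝕂) ^ (p ^ e)
          = MvPowerSeries.C lam *
              initialForm (PowerSeries.coeff (c - p ^ e) f) := by
  subst hu
  set v : MvPowerSeries (Fin n) 𝕂 := ↑q
  replace hE : ∀ g, PowerSeries.IsExpansionAt v g (E g) := hE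
  have hpe : p ^ e ≤ c := Nat.le_of_dvd hc1 he
  obtain ⟨o, ho⟩ : ∃ o : ℕ, idealOrd (maximalIdeal _) (coeffIdeal J c) = o :=
    (ENat.ne_top_iff_exists.1 (ne_top_of_lt hincr)).imp fun _ h => h.symm
  obtain ⟨hK, hK'⟩ := idealOrd_eq_coe_iff.1 ho
  have hK₁ := lt_idealOrd_iff.1 (ho ▸ hincr)
  have hv : (d : ℕ∞) ≤ v.order := (hqd.order_coe hq0).ge
  have hlo := factorial_mul_le_of_coeffIdealE_le hv hE hK₁ hK'
  have hlead := (hE f).lt_order_coeff_sub_of_lt_order hv hd (Nat.sub_le c (p ^ e)) fun i hi =>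
    (Nat.cast_le.2 (mul_le_mul_div_of_le hlo c.factorial_pos)).trans_lt
      (coeffIdealE_le_maximalIdeal_pow_succ_iff.1 hK₁ f hfJ i hi)
  have hw : constantCoeff (E f c) ≠ 0 := (hE f).constantCoeff_coeff
    (one_le_order_iff_constCoeff_eq_zero.1 ((Nat.one_le_cast.2 hd).trans hv)) c ▸ hreg.2
  rw [Nat.sub_sub_self hpe, Nat.choose_symm hpe] at hlead
  obtain ⟨hord, μ, hμ, hinit⟩ := order_eq_and_initialForm_eq hqd hq0
    (cast_choose_prime_pow_ne_zero hp he he') hw hlead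
  have hup := le_factorial_mul_of_order_coeff_eq hK hfJ (Nat.sub_lt hc1 (pow_pos hp.pos e))
    (by rwa [Nat.sub_sub_self hpe])
  refine ⟨by rw [ho, le_antisymm hlo hup], μ⁻¹, inv_ne_zero hμ, ?_⟩
  rw [hinit, ← mul_assoc, ← map_mul, inv_mul_cancel₀ hμ, map_one, one_mul]

/-- Coordinate change `u = z − q`, `q` a nonzero homogeneous polynomial of positive degree:
if some `f ∈ J` is `z`-regular of order `c` and `o₁ > o`, then `c!·deg q = o` and
`q^{p^e} = λ·in(f_{c−p^e})` for some `λ ∈ 𝕂^*`, where `p^e` is the largest power of `p`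
dividing `c`. -/
theorem translation_increasing_order_shape {𝕂 : Type*} [Field 𝕂] (p : ℕ)
    (hp : p.Prime) [CharP 𝕂 p] {n : ℕ}
    (q : MvPolynomial (Fin n) 𝕂) (d : ℕ) (hq0 : q ≠ 0) (hqd : q.IsHomogeneous d) (hd : 1 ≤ d)
    (u : PowerSeries (MvPowerSeries (Fin n) 𝕂))
    (hu : u = PowerSeries.X -
      PowerSeries.C (↑q : MvPowerSeries (Fin n) 𝕂))
    (J : Ideal (PowerSeries (MvPowerSeries (Fin n) 𝕂))) (c : ℕ) (hc1 : 1 ≤ c)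
    (hc : idealOrd (IsLocalRing.maximalIdeal (PowerSeries (MvPowerSeries (Fin n) 𝕂))) J
      = (c : ℕ∞))
    (E : PowerSeries (MvPowerSeries (Fin n) 𝕂) → ℕ → MvPowerSeries (Fin n) 𝕂)
    (hE : ∀ f : PowerSeries (MvPowerSeries (Fin n) 𝕂), ∀ N : ℕ,
      f - ∑ i ∈ Finset.range N, PowerSeries.C (E f i) * u ^ i
        ∈ Ideal.span {u ^ N})
    (e : ℕ) (he : p ^ e ∣ c) (he' : ¬ p ^ (e + 1) ∣ c)
    (f : PowerSeries (MvPowerSeries (Fin n) 𝕂)) (hfJ : f ∈ J) (hreg : zRegular f c)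
    (hincr : idealOrd (IsLocalRing.maximalIdeal (MvPowerSeries (Fin n) 𝕂)) (coeffIdealE E J c)
      > idealOrd (IsLocalRing.maximalIdeal (MvPowerSeries (Fin n) 𝕂)) (coeffIdeal J c)) :
    ((c.factorial * d : ℕ) : ℕ∞)
        = idealOrd (IsLocalRing.maximalIdeal (MvPowerSeries (Fin n) 𝕂)) (coeffIdeal J c) ∧
      ∃ lam : 𝕂, lam ≠ 0 ∧
        (↑q : MvPowerSeries (Fin n) 𝕂) ^ (p ^ e)
          = MvPowerSeries.C lam *
              initialForm (PowerSeries.coeff (c - p ^ e) f) :=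
  translation_increasing_order_shape_general p hp q d hq0 hqd hd u hu J c hc1 E hE e he he' f hfJ
    hreg hincr
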